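/- arXiv:2604.12296 — 3 statements merged into one kernel-verified Lean document; each statement's English description precedes it below -/
import Mathlib

section
/- Assume the standard scarred-sequence setting. Then for any choice of real numbers λ_{N,(i,i')} with 0 ≤ λ_{N,(i,i')} ≤ Λ (Λ ≥ 0 a constant independent of N, i, i'), the sum over ordered pairs (i, i') with i ≠ i' and X_{N,i} ∩ X_{N,i'} = ∅ of λ_{N,(i,i')} · ⟨A_N, P_{N,i} P_{N,i'} A_N⟩ converges to 0 as N → ∞. -/
open Filter
open scoped BigOperators

noncomputable section

/-- The `M`-qudit space: complex functions on configurations `Fin M → Fin d`,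
with the standard (Euclidean) inner product. -/
abbrev QuditSpace (d M : ℕ) : Type := EuclideanSpace ℂ (Fin M → Fin d)

/-- The computational basis vector indexed by the configuration `s`. -/
def basisVec {d M : ℕ} (s : Fin M → Fin d) : QuditSpace d M :=
  EuclideanSpace.single s 1

/-- The matrix element `⟨e_s, T e_t⟩` of an operator `T` on the qudit space. -/
def matElem {d M : ℕ} (T : QuditSpace d M →L[ℂ] QuditSpace d M)
    (s t : Fin M → Fin d) : ℂ :=
  inner ℂ (basisVec s) (T (basisVec t))

/-- `T` is supported on the set of sites `X`: its matrix elements vanish whenever the two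
configurations differ at a site outside `X`, and (among configuration pairs agreeing
outside `X`) they depend only on the restrictions of the configurations to `X`. -/
def SupportedOn {d M : ℕ} (X : Finset (Fin M))
    (T : QuditSpace d M →L[ℂ] QuditSpace d M) : Prop :=
  (∀ s t : Fin M → Fin d, (∃ j ∉ X, s j ≠ t j) → matElem T s t = 0) ∧
  (∀ s t s' t' : Fin M → Fin d,
      (∀ j ∈ X, s j = s' j) → (∀ j ∈ X, t j = t' j) →
      (∀ j ∉ X, s j = t j) → (∀ j ∉ X, s' j = t' j) →
      matElem T s t = matElem T s' t')

/-- An orthogonal projection: a self-adjoint idempotent operator. -/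
def IsOrthProj {d M : ℕ} (P : QuditSpace d M →L[ℂ] QuditSpace d M) : Prop :=
  (∀ v w : QuditSpace d M, (inner ℂ (P v) w : ℂ) = inner ℂ v (P w)) ∧ P ∘L P = P

open Finset

/-!
Projections supported on disjoint sets of sites commute, so for a disjoint pair
`⟪A, P_i P_i' A⟫ = ‖P_i P_i' A‖ ^ 2 ≥ 0` and the weights may be replaced by `Λ`. The unweighted sum
over disjoint pairs is the Gram sum `∑_{i,i'} ⟪P_i A, P_i' A⟫ = ‖∑_i P_i A‖ ^ 2` minus the pairs
that coincide or overlap. Each index has at most `1 + C` such partners, so by Cauchy–Schwarz they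
contribute at most `(1 + C) ∑_i ‖P_i A‖ ^ 2 = (1 + C) re ⟪A, ∑_i P_i A⟫ ≤ (1 + C) ‖∑_i P_i A‖`.
Both bounds tend to `0`.
-/

section MatrixElements

variable {d M : ℕ}

theorem basisVec_eq_basisFun (s : Fin M → Fin d) :
    basisVec s = EuclideanSpace.basisFun (Fin M → Fin d) ℂ s :=
  (EuclideanSpace.basisFun_apply _ _ s).symm

theorem matElem_comp (T U : QuditSpace d M →L[ℂ] QuditSpace d M) (s t : Fin M → Fin d) :
    matElem (T ∘L U) s t = ∑ u, matElem T s u * matElem U u t := by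
  simp only [matElem, basisVec_eq_basisFun, ContinuousLinearMap.comp_apply]
  conv_lhs => rw [← (EuclideanSpace.basisFun _ ℂ).sum_repr' (U _)]
  simp only [map_sum, map_smul, inner_sum, inner_smul_right, mul_comm]

theorem ext_matElem {T U : QuditSpace d M →L[ℂ] QuditSpace d M}
    (h : ∀ s t, matElem T s t = matElem U s t) : T = U := by
  let b := (EuclideanSpace.basisFun (Fin M → Fin d) ℂ).toBasis
  refine ContinuousLinearMap.coe_injective <|
    b.ext fun t => InnerProductSpace.ext_inner_left_basis b fun s => ?_
  simpa [matElem, basisVec_eq_basisFun, b] using h s t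

end MatrixElements

section Support

variable {d M : ℕ} {X Y : Finset (Fin M)} {P Q : QuditSpace d M →L[ℂ] QuditSpace d M}

theorem SupportedOn.matElem_eq_zero (hP : SupportedOn X P) {s t : Fin M → Fin d} {j : Fin M}
    (hj : j ∉ X) (hst : s j ≠ t j) : matElem P s t = 0 :=
  hP.1 s t ⟨j, hj, hst⟩

theorem SupportedOn.matElem_comp_of_disjoint (hP : SupportedOn X P) (hQ : SupportedOn Y Q)
    (hXY : Disjoint X Y) (s t : Fin M → Fin d) :
    matElem (P ∘L Q) s t = matElem P s (X.piecewise t s) * matElem Q (X.piecewise t s) t := by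
  rw [matElem_comp, Finset.sum_eq_single_of_mem _ (Finset.mem_univ _)]
  intro u _ hu
  obtain ⟨j, hj⟩ := Function.ne_iff.1 hu
  by_cases hjX : j ∈ X
  · rw [Finset.piecewise_eq_of_mem _ _ _ hjX] at hj
    rw [hQ.matElem_eq_zero (Finset.disjoint_left.1 hXY hjX) hj, mul_zero]
  · rw [Finset.piecewise_eq_of_notMem _ _ _ hjX] at hj
    rw [hP.matElem_eq_zero hjX (Ne.symm hj), zero_mul]

theorem SupportedOn.commute_of_disjoint (hP : SupportedOn X P) (hQ : SupportedOn Y Q)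
    (hXY : Disjoint X Y) : Commute P Q := by
  refine ext_matElem fun s t => ?_
  rw [ContinuousLinearMap.mul_def, ContinuousLinearMap.mul_def,
    hP.matElem_comp_of_disjoint hQ hXY, hQ.matElem_comp_of_disjoint hP hXY.symm]
  by_cases hst : ∀ j ∉ X, j ∉ Y → s j = t j
  · rw [mul_comm]
    congr 1
    · refine hQ.2 _ _ _ _ ?_ ?_ ?_ ?_ <;> intro j hj
      all_goals grind [Finset.piecewise, Finset.disjoint_left]
    · refine hP.2 _ _ _ _ ?_ ?_ ?_ ?_ <;> intro j hj
      all_goals grind [Finset.piecewise, Finset.disjoint_left]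
  · push Not at hst
    obtain ⟨j, hjX, hjY, hj⟩ := hst
    rw [hQ.matElem_eq_zero (s := X.piecewise t s) hjY (by rwa [piecewise_eq_of_notMem _ _ _ hjX]),
      hP.matElem_eq_zero (s := Y.piecewise t s) hjX (by rwa [piecewise_eq_of_notMem _ _ _ hjY]),
      mul_zero, mul_zero]

end Support

theorem IsOrthProj.isStarProjection {d M : ℕ} {P : QuditSpace d M →L[ℂ] QuditSpace d M}
    (hP : IsOrthProj P) : IsStarProjection P :=
  ⟨hP.2, ContinuousLinearMap.isSelfAdjoint_iff_isSymmetric.2 hP.1⟩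

section InnerProduct

variable {𝕜 E ι : Type*} [RCLike 𝕜] [NormedAddCommGroup E] [InnerProductSpace 𝕜 E] [Fintype ι]
  {r : ι → ι → Prop} [DecidableRel r] [Std.Symm r] {n : ℕ}

theorem sum_filter_mul_le_of_card_le (hn : ∀ i, #{j | r i j} ≤ n) (x : ι → ℝ) :
    ∑ p : ι × ι with r p.1 p.2, x p.1 * x p.2 ≤ n * ∑ i, x i ^ 2 := by
  have hrow : ∑ p : ι × ι with r p.1 p.2, x p.1 ^ 2 ≤ n * ∑ i, x i ^ 2 := by
    rw [Finset.sum_filter, Fintype.sum_prod_type, Finset.mul_sum]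
    refine Finset.sum_le_sum fun i _ => ?_
    rw [← Finset.sum_filter]
    simp only [Finset.sum_const, nsmul_eq_mul]
    exact mul_le_mul_of_nonneg_right (by exact_mod_cast hn i) (sq_nonneg _)
  have hswap : ∑ p : ι × ι with r p.1 p.2, x p.2 ^ 2 = ∑ p : ι × ι with r p.1 p.2, x p.1 ^ 2 :=
    Finset.sum_equiv (Equiv.prodComm ι ι) (by simp [Std.Symm.iff]) (by simp)
  calc ∑ p : ι × ι with r p.1 p.2, x p.1 * x p.2
      ≤ ∑ p : ι × ι with r p.1 p.2, (x p.1 ^ 2 + x p.2 ^ 2) / 2 :=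
        Finset.sum_le_sum fun p _ => by linarith [two_mul_le_add_sq (x p.1) (x p.2)]
    _ ≤ n * ∑ i, x i ^ 2 := by
        rw [← Finset.sum_div, Finset.sum_add_distrib, hswap]
        linarith

theorem norm_sum_inner_filter_not_le (hn : ∀ i, #{j | r i j} ≤ n) (v : ι → E) :
    ‖∑ p : ι × ι with ¬r p.1 p.2, inner 𝕜 (v p.1) (v p.2)‖ ≤
      ‖∑ i, v i‖ ^ 2 + n * ∑ i, ‖v i‖ ^ 2 := by
  have hgram : ∑ p : ι × ι, inner 𝕜 (v p.1) (v p.2) = inner 𝕜 (∑ i, v i) (∑ i, v i) := by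
    simp only [Fintype.sum_prod_type, sum_inner, inner_sum]
    exact Finset.sum_comm
  have hsplit := Finset.sum_filter_add_sum_filter_not (univ : Finset (ι × ι)) (fun p => r p.1 p.2)
    (fun p => inner 𝕜 (v p.1) (v p.2))
  rw [hgram] at hsplit
  calc _ = ‖inner 𝕜 (∑ i, v i) (∑ i, v i) -
        ∑ p : ι × ι with r p.1 p.2, inner 𝕜 (v p.1) (v p.2)‖ := by
        rw [← hsplit, add_sub_cancel_left]
    _ ≤ ‖∑ i, v i‖ ^ 2 + ∑ p : ι × ι with r p.1 p.2, ‖v p.1‖ * ‖v p.2‖ := by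
        refine (norm_sub_le _ _).trans (add_le_add ?_ ?_)
        · rw [inner_self_eq_norm_sq_to_K]
          simp
        · exact (norm_sum_le _ _).trans (Finset.sum_le_sum fun p _ => norm_inner_le_norm _ _)
    _ ≤ _ := by
        gcongr
        exact sum_filter_mul_le_of_card_le hn fun i => ‖v i‖

variable [CompleteSpace E]

theorem IsStarProjection.inner_self_apply {T : E →L[𝕜] E} (hT : IsStarProjection T) (x : E) :
    inner 𝕜 x (T x) = (‖T x‖ : 𝕜) ^ 2 := by
  have hTT : T (T x) = T x := congr($(hT.isIdempotentElem.eq) x)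
  rw [← hTT, ← ContinuousLinearMap.adjoint_inner_left, hT.isSelfAdjoint.adjoint_eq, hTT,
    inner_self_eq_norm_sq_to_K]

theorem sum_norm_sq_apply_le {P : ι → E →L[𝕜] E}
    (hP : ∀ i, IsStarProjection (P i)) (x : E) :
    ∑ i, ‖P i x‖ ^ 2 ≤ ‖x‖ * ‖(∑ i, P i) x‖ := by
  have hsum : ∑ i, ‖P i x‖ ^ 2 = RCLike.re (inner 𝕜 x ((∑ i, P i) x)) := by
    simp only [_root_.sum_apply, inner_sum, map_sum, (hP _).inner_self_apply]
    norm_cast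
  rw [hsum]
  exact (RCLike.re_le_norm _).trans (norm_inner_le_norm _ _)

theorem norm_sum_inner_apply_apply_le {P : ι → E →L[𝕜] E} (hP : ∀ i, IsStarProjection (P i))
    (hn : ∀ i, #{j | r i j} ≤ n) (x : E) :
    ‖∑ p : ι × ι with ¬r p.1 p.2, inner 𝕜 x (P p.1 (P p.2 x))‖ ≤
      ‖(∑ i, P i) x‖ ^ 2 + n * (‖x‖ * ‖(∑ i, P i) x‖) := by
  have hsymm (p : ι × ι) : inner 𝕜 x (P p.1 (P p.2 x)) = inner 𝕜 (P p.1 x) (P p.2 x) := by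
    rw [← ContinuousLinearMap.adjoint_inner_left, (hP p.1).isSelfAdjoint.adjoint_eq]
  simp only [hsymm]
  calc _ ≤ ‖∑ i, P i x‖ ^ 2 + n * ∑ i, ‖P i x‖ ^ 2 := norm_sum_inner_filter_not_le hn _
    _ ≤ _ := by
        rw [← _root_.sum_apply]
        gcongr
        exact sum_norm_sq_apply_le hP x

end InnerProduct

open scoped ComplexOrder in
theorem IsOrthProj.inner_apply_apply_nonneg {d M : ℕ} {X Y : Finset (Fin M)}
    {P Q : QuditSpace d M →L[ℂ] QuditSpace d M} (hP : IsOrthProj P) (hQ : IsOrthProj Q)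
    (hPX : SupportedOn X P) (hQY : SupportedOn Y Q) (hXY : Disjoint X Y) (x : QuditSpace d M) :
    0 ≤ inner ℂ x (P (Q x)) := by
  have hPQ := hP.isStarProjection.mul hQ.isStarProjection (hPX.commute_of_disjoint hQY hXY)
  rw [← mul_apply_eq_comp, hPQ.inner_self_apply]
  positivity

open scoped ComplexOrder in
theorem norm_sum_ofReal_mul_le {α 𝕜 : Type*} [RCLike 𝕜] {s : Finset α} {z : α → 𝕜}
    {w : α → ℝ} {c : ℝ} (hz : ∀ a ∈ s, 0 ≤ z a) (hw : ∀ a ∈ s, 0 ≤ w a ∧ w a ≤ c) :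
    ‖∑ a ∈ s, (w a : 𝕜) * z a‖ ≤ c * ‖∑ a ∈ s, z a‖ := by
  have hnorm : ‖∑ a ∈ s, z a‖ = ∑ a ∈ s, ‖z a‖ := by
    apply RCLike.ofReal_injective (K := 𝕜)
    rw [RCLike.norm_of_nonneg' (Finset.sum_nonneg hz), RCLike.ofReal_sum]
    exact Finset.sum_congr rfl fun a ha => (RCLike.norm_of_nonneg' (hz a ha)).symm
  rw [hnorm, Finset.mul_sum]
  refine (norm_sum_le _ _).trans (Finset.sum_le_sum fun a ha => ?_)
  rw [norm_mul, RCLike.norm_of_nonneg (hw a ha).1]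
  exact mul_le_mul_of_nonneg_right (hw a ha).2 (norm_nonneg _)

theorem card_filter_eq_or_inter_nonempty_le {ι α : Type*} [Fintype ι] [DecidableEq ι]
    [DecidableEq α] {X : ι → Finset α} {C : ℕ}
    (hC : ∀ i, #{i' | i' ≠ i ∧ (X i ∩ X i').Nonempty} ≤ C) (i : ι) :
    #{j | i = j ∨ (X i ∩ X j).Nonempty} ≤ 1 + C := by
  calc _ ≤ #(insert i ({i' | i' ≠ i ∧ (X i ∩ X i').Nonempty} : Finset ι)) :=
        Finset.card_le_card fun j => by simp only [Finset.mem_filter, Finset.mem_insert]; tauto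
    _ ≤ 1 + C := (Finset.card_insert_le _ _).trans (by have := hC i; omega)

theorem disjoint_pair_expectation_tendsto_zero_general
    (d C : ℕ)
    (M : ℕ → ℕ) (I : ℕ → Type) [∀ N, Fintype (I N)] [∀ N, DecidableEq (I N)]
    (X : ∀ N, I N → Finset (Fin (M N)))
    (P : ∀ N, (i : I N) → QuditSpace d (M N) →L[ℂ] QuditSpace d (M N))
    (A : ∀ N, QuditSpace d (M N))
    (hC : ∀ N (i : I N),
      (Finset.univ.filter fun i' : I N => i' ≠ i ∧ (X N i ∩ X N i').Nonempty).card ≤ C)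
    (hproj : ∀ N (i : I N), IsOrthProj (P N i))
    (hsupp : ∀ N (i : I N), SupportedOn (X N i) (P N i))
    (hA : ∀ N, ‖A N‖ = 1)
    (hlim : Tendsto (fun N => ‖(∑ i : I N, P N i) (A N)‖) atTop (nhds 0))
    (Lam : ℝ)
    (lam : ∀ N, I N × I N → ℝ)
    (hlam : ∀ N (p : I N × I N), 0 ≤ lam N p ∧ lam N p ≤ Lam) :
    Tendsto
      (fun N => ∑ p ∈ Finset.univ.filter
          (fun p : I N × I N => p.1 ≠ p.2 ∧ X N p.1 ∩ X N p.2 = ∅),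
        (lam N p : ℂ) * (inner ℂ (A N) ((P N p.1) ((P N p.2) (A N))) : ℂ))
      atTop (nhds 0) := by
  let r N (i j : I N) : Prop := i = j ∨ (X N i ∩ X N j).Nonempty
  have hr N : Std.Symm (r N) := ⟨fun i j => by simp only [r, eq_comm, Finset.inter_comm]; exact id⟩
  have hdisj N : univ.filter (fun p : I N × I N => p.1 ≠ p.2 ∧ X N p.1 ∩ X N p.2 = ∅) =
      univ.filter fun p => ¬r N p.1 p.2 := by
    ext; simp [r, Finset.not_nonempty_iff_eq_empty]
  have hbound : Tendsto (fun N => ‖(∑ i, P N i) (A N)‖ ^ 2 +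
      ((1 + C : ℕ) : ℝ) * (‖A N‖ * ‖(∑ i, P N i) (A N)‖)) atTop (nhds 0) := by
    simpa [hA] using (hlim.pow 2).add (hlim.const_mul (1 + C : ℝ))
  have hsum : Tendsto (fun N => ‖∑ p : I N × I N with ¬r N p.1 p.2,
      inner ℂ (A N) (P N p.1 (P N p.2 (A N)))‖) atTop (nhds 0) :=
    squeeze_zero (fun _ => norm_nonneg _) (fun N => norm_sum_inner_apply_apply_le
      (fun i => (hproj N i).isStarProjection) (card_filter_eq_or_inter_nonempty_le (hC N)) (A N))
      hbound
  simp only [← hdisj] at hsum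
  refine squeeze_zero_norm (fun N => norm_sum_ofReal_mul_le (fun p hp => ?_) fun p _ => hlam N p)
    (by simpa using hsum.const_mul Lam)
  exact (hproj N p.1).inner_apply_apply_nonneg (hproj N p.2) (hsupp N p.1) (hsupp N p.2)
    (Finset.disjoint_iff_inter_eq_empty.2 (Finset.mem_filter.1 hp).2.2) (A N)

/-- **Part 2 of Lemma 1 of the paper** (standard scarred-sequence setting): the weighted sum of
cross-expectations `⟨A_N, P_{N,i} P_{N,i'} A_N⟩` over ordered pairs of distinct indices with
disjoint supports tends to `0`. -/
theorem disjoint_pair_expectation_tendsto_zero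
    (d K C : ℕ) (hd : 2 ≤ d)
    (M : ℕ → ℕ) (I : ℕ → Type) [∀ N, Fintype (I N)] [∀ N, DecidableEq (I N)]
    (X : ∀ N, I N → Finset (Fin (M N)))
    (P : ∀ N, (i : I N) → QuditSpace d (M N) →L[ℂ] QuditSpace d (M N))
    (A : ∀ N, QuditSpace d (M N))
    (hK : ∀ N (i : I N), (X N i).card ≤ K)
    (hC : ∀ N (i : I N),
      (Finset.univ.filter fun i' : I N => i' ≠ i ∧ (X N i ∩ X N i').Nonempty).card ≤ C)
    (hproj : ∀ N (i : I N), IsOrthProj (P N i))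
    (hsupp : ∀ N (i : I N), SupportedOn (X N i) (P N i))
    (hA : ∀ N, ‖A N‖ = 1)
    (hlim : Tendsto (fun N => ‖(∑ i : I N, P N i) (A N)‖) atTop (nhds 0))
    (Lam : ℝ) (hLam : 0 ≤ Lam)
    (lam : ∀ N, I N × I N → ℝ)
    (hlam : ∀ N (p : I N × I N), 0 ≤ lam N p ∧ lam N p ≤ Lam) :
    Tendsto
      (fun N => ∑ p ∈ Finset.univ.filter
          (fun p : I N × I N => p.1 ≠ p.2 ∧ X N p.1 ∩ X N p.2 = ∅),
        (lam N p : ℂ) * (inner ℂ (A N) ((P N p.1) ((P N p.2) (A N))) : ℂ))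
      atTop (nhds 0) :=
  disjoint_pair_expectation_tendsto_zero_general d C M I X P A hC hproj hsupp hA hlim Lam lam hlam
end
end

section
/- Assume the standard scarred-sequence setting, fix a linear order on each index set I_N, and suppose additionally given, for each N and each i ∈ I_N, an orthonormal family of vectors (π_{N,i}^α)_α in the M_N-qudit space such that P_{N,i} = Σ_α Π_{N,i}^α, where Π_{N,i}^α denotes the rank-one orthogonal projection onto π_{N,i}^α, and each Π_{N,i}^α is supported on X_{N,i}. Then the quantity Σ_{i < i', X_{N,i} ∩ X_{N,i'} ≠ ∅} Σ_{α, α'} ⟨A_N, (Π_{N,i}^α + Π_{N,i'}^{α'})² A_N⟩ converges to 0 as N → ∞. -/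
/-!
Each summand is `‖(Π + Π') A‖² ≤ 2 ‖Π A‖² + 2 ‖Π' A‖²`. An orthonormal family of rank-one
projectors supported on at most `K` sites has at most `d ^ K` members, so the sums over `α, α'`
cost a factor `2 d ^ K`, and every index lies in at most `C` overlapping pairs. The total is
therefore at most `4 C d ^ K ∑ i ⟨A, P_i A⟩ ≤ 4 C d ^ K ‖(∑ i P_i) A‖ → 0`.
-/

open Filter
open scoped BigOperators

noncomputable section

/-- The rank-one orthogonal projection `|v⟩⟨v|` onto (the span of) a unit vector `v`. -/
def rankOne {d M : ℕ} (v : QuditSpace d M) : QuditSpace d M →L[ℂ] QuditSpace d M :=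
  (innerSL ℂ v).smulRight v

open Finset

lemma LinearMap.IsSymmetric.inner_apply_apply_self {𝕜 E : Type*} [RCLike 𝕜]
    [NormedAddCommGroup E] [InnerProductSpace 𝕜 E] {T : E →ₗ[𝕜] E} (hT : T.IsSymmetric) (x : E) :
    inner 𝕜 x (T (T x)) = ((‖T x‖ ^ 2 : ℝ) : 𝕜) := by
  rw [← hT, inner_self_eq_norm_sq_to_K]
  norm_cast

section RankOne

variable {d M : ℕ}

lemma rankOne_eq (v : QuditSpace d M) : rankOne v = InnerProductSpace.rankOne ℂ v v := rfl

lemma isSymmetric_rankOne (v : QuditSpace d M) :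
    (rankOne v : QuditSpace d M →ₗ[ℂ] QuditSpace d M).IsSymmetric :=
  InnerProductSpace.isSymmetric_rankOne_self v

lemma inner_rankOne_self_of_norm_eq_one {v : QuditSpace d M} (hv : ‖v‖ = 1) (x : QuditSpace d M) :
    inner ℂ x (rankOne v x) = ((‖rankOne v x‖ ^ 2 : ℝ) : ℂ) := by
  rw [rankOne_eq, InnerProductSpace.rankOne_apply, inner_smul_right, ← inner_conj_symm x v,
    RCLike.mul_conj, norm_smul, hv, mul_one]
  norm_cast

lemma matElem_rankOne (v : QuditSpace d M) (s t : Fin M → Fin d) :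
    matElem (rankOne v) s t = (starRingEnd ℂ) (v t) * v s := by
  simp [matElem, rankOne_eq, basisVec,
    EuclideanSpace.inner_single_left, EuclideanSpace.inner_single_right]

-- An operator supported on `X` acts as the identity on a site outside `X`, which a rank-one
-- operator can only do when it vanishes.
theorem eq_zero_of_rankOne_supportedOn (hd : 2 ≤ d) {X : Finset (Fin M)} {v : QuditSpace d M}
    (hv : SupportedOn X (rankOne v)) {j : Fin M} (hj : j ∉ X) : v = 0 := by
  ext s
  obtain ⟨k, hk⟩ : ∃ k : Fin d, k ≠ s j :=
    Fintype.exists_ne_of_one_lt_card (by simp; omega) (s j)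
  set s' := Function.update s j k
  have hagree : ∀ i ∈ X, s i = s' i := fun i hi =>
    (Function.update_of_ne (ne_of_mem_of_not_mem hi hj) _ _).symm
  have hoff : matElem (rankOne v) s s' = 0 := hv.1 s s' ⟨j, hj, by simpa [s'] using hk.symm⟩
  have hdiag : matElem (rankOne v) s s = matElem (rankOne v) s' s' :=
    hv.2 s s s' s' hagree hagree (fun _ _ => rfl) (fun _ _ => rfl)
  simp only [matElem_rankOne] at hoff hdiag
  rcases mul_eq_zero.mp hoff with h | h
  · simpa [RCLike.conj_mul, h] using hdiag
  · exact h

theorem card_le_pow_card_of_orthonormal_of_supportedOn (hd : 2 ≤ d) {X : Finset (Fin M)}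
    {κ : Type*} [Fintype κ] {v : κ → QuditSpace d M} (hv : Orthonormal ℂ v)
    (hX : ∀ α, SupportedOn X (rankOne (v α))) : Fintype.card κ ≤ d ^ #X := by
  by_cases hXuniv : X = univ
  · subst hXuniv
    simpa [finrank_euclideanSpace, Fintype.card_fun] using
      hv.linearIndependent.fintype_card_le_finrank
  · obtain ⟨j, hj⟩ : ∃ j, j ∉ X := by simpa [eq_univ_iff_forall] using hXuniv
    have : IsEmpty κ := ⟨fun α => by
      simpa [eq_zero_of_rankOne_supportedOn hd (hX α) hj] using hv.1 α⟩
    simp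

theorem sum_sum_norm_rankOne_sq_le {ι : Type*} [Fintype ι] {κ : ι → Type*}
    [∀ i, Fintype (κ i)] {v : ∀ i, κ i → QuditSpace d M} (hv : ∀ i α, ‖v i α‖ = 1)
    (x : QuditSpace d M) :
    ∑ i, ∑ α, ‖rankOne (v i α) x‖ ^ 2 ≤ ‖x‖ * ‖(∑ i, ∑ α, rankOne (v i α)) x‖ := by
  have h : ((∑ i, ∑ α, ‖rankOne (v i α) x‖ ^ 2 : ℝ) : ℂ) =
      inner ℂ x ((∑ i, ∑ α, rankOne (v i α)) x) := by
    simp only [_root_.sum_apply, inner_sum,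
      inner_rankOne_self_of_norm_eq_one (hv _ _), Complex.ofReal_sum]
  calc _ = (inner ℂ x ((∑ i, ∑ α, rankOne (v i α)) x)).re := by rw [← h, Complex.ofReal_re]
    _ ≤ ‖inner ℂ x ((∑ i, ∑ α, rankOne (v i α)) x)‖ := Complex.re_le_norm _
    _ ≤ _ := norm_inner_le_norm _ _

lemma inner_rankOne_add_comp_self (u w x : QuditSpace d M) :
    inner ℂ x (((rankOne u + rankOne w) ∘L (rankOne u + rankOne w)) x) =
      ((‖(rankOne u + rankOne w) x‖ ^ 2 : ℝ) : ℂ) :=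
  ((isSymmetric_rankOne u).add (isSymmetric_rankOne w)).inner_apply_apply_self x

end RankOne

theorem sum_sum_norm_add_sq_le {E : Type*} [SeminormedAddCommGroup E] {κ κ' : Type*}
    [Fintype κ] [Fintype κ'] (u : κ → E) (w : κ' → E) {B : ℝ}
    (hκ : (Fintype.card κ : ℝ) ≤ B) (hκ' : (Fintype.card κ' : ℝ) ≤ B) :
    ∑ α, ∑ β, ‖u α + w β‖ ^ 2 ≤ 2 * B * (∑ α, ‖u α‖ ^ 2 + ∑ β, ‖w β‖ ^ 2) := by
  calc ∑ α, ∑ β, ‖u α + w β‖ ^ 2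
      ≤ ∑ α, ∑ β, 2 * (‖u α‖ ^ 2 + ‖w β‖ ^ 2) := by
        gcongr with α _ β _
        exact (pow_le_pow_left₀ (norm_nonneg _) (norm_add_le _ _) 2).trans add_sq_le
    _ = 2 * (Fintype.card κ' * ∑ α, ‖u α‖ ^ 2 + Fintype.card κ * ∑ β, ‖w β‖ ^ 2) := by
        simp only [← mul_sum, sum_add_distrib, sum_const, card_univ, nsmul_eq_mul]
    _ ≤ 2 * (B * ∑ α, ‖u α‖ ^ 2 + B * ∑ β, ‖w β‖ ^ 2) := by gcongr
    _ = 2 * B * (∑ α, ‖u α‖ ^ 2 + ∑ β, ‖w β‖ ^ 2) := by ring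

section DoubleCounting

variable {ι : Type*} [Fintype ι] [DecidableEq ι] (R : ι → ι → Prop) [DecidableRel R]
  {C : ℕ} {a : ι → ℝ}

theorem sum_fst_le_of_degree_le (hC : ∀ i, #{j | j ≠ i ∧ R i j} ≤ C) (ha : ∀ i, 0 ≤ a i)
    {S : Finset (ι × ι)} (hS : ∀ p ∈ S, p.2 ≠ p.1 ∧ R p.1 p.2) :
    ∑ p ∈ S, a p.1 ≤ C * ∑ i, a i := by
  calc ∑ p ∈ S, a p.1
      ≤ ∑ p ∈ {p : ι × ι | p.2 ≠ p.1 ∧ R p.1 p.2}, a p.1 :=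
        sum_le_sum_of_subset_of_nonneg (fun p hp => by simpa using hS p hp) fun p _ _ => ha p.1
    _ = ∑ i, (#{j | j ≠ i ∧ R i j} : ℝ) * a i := by
        rw [sum_filter, Fintype.sum_prod_type]
        refine sum_congr rfl fun i _ => ?_
        simp only [← sum_filter, sum_const, nsmul_eq_mul]
    _ ≤ ∑ i, (C : ℝ) * a i :=
        sum_le_sum fun i _ => mul_le_mul_of_nonneg_right (by exact_mod_cast hC i) (ha i)
    _ = C * ∑ i, a i := (mul_sum ..).symm

theorem sum_filter_lt_add_le_of_degree_le [LinearOrder ι] (hR : ∀ i j, R i j → R j i)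
    (hC : ∀ i, #{j | j ≠ i ∧ R i j} ≤ C) (ha : ∀ i, 0 ≤ a i) :
    ∑ p ∈ {p : ι × ι | p.1 < p.2 ∧ R p.1 p.2}, (a p.1 + a p.2) ≤ 2 * C * ∑ i, a i := by
  set S : Finset (ι × ι) := {p | p.1 < p.2 ∧ R p.1 p.2}
  have hfst := sum_fst_le_of_degree_le R hC ha (S := S) fun p hp => by
    simp only [S, mem_filter, mem_univ, true_and] at hp
    exact ⟨hp.1.ne', hp.2⟩
  have hsnd := sum_fst_le_of_degree_le R hC ha (S := S.map (Equiv.prodComm ι ι).toEmbedding)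
    fun p hp => by
      simp only [S, Finset.mem_map, mem_filter, mem_univ, true_and] at hp
      obtain ⟨q, hq, rfl⟩ := hp
      exact ⟨hq.1.ne, hR _ _ hq.2⟩
  simp only [sum_map, Equiv.coe_toEmbedding, Equiv.prodComm_apply, Prod.fst_swap] at hsnd
  rw [sum_add_distrib]
  linarith

end DoubleCounting

theorem sum_overlapping_pairs_norm_sq_le {d M : ℕ} (hd : 2 ≤ d) {ι : Type*} [Fintype ι]
    [DecidableEq ι] [LinearOrder ι] {κ : ι → Type*} [∀ i, Fintype (κ i)]
    {X : ι → Finset (Fin M)} {K C : ℕ} (hK : ∀ i, #(X i) ≤ K)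
    (hC : ∀ i, #{i' | i' ≠ i ∧ (X i ∩ X i').Nonempty} ≤ C)
    {v : ∀ i, κ i → QuditSpace d M} (hv : ∀ i, Orthonormal ℂ (v i))
    (hsupp : ∀ i α, SupportedOn (X i) (rankOne (v i α))) {x : QuditSpace d M} (hx : ‖x‖ = 1) :
    ∑ p ∈ {p : ι × ι | p.1 < p.2 ∧ (X p.1 ∩ X p.2).Nonempty}, ∑ α, ∑ α',
        ‖(rankOne (v p.1 α) + rankOne (v p.2 α')) x‖ ^ 2
      ≤ 4 * C * d ^ K * ‖(∑ i, ∑ α, rankOne (v i α)) x‖ := by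
  set a : ι → ℝ := fun i => ∑ α, ‖rankOne (v i α) x‖ ^ 2
  have hcard : ∀ i, (Fintype.card (κ i) : ℝ) ≤ d ^ K := fun i => by
    exact_mod_cast (card_le_pow_card_of_orthonormal_of_supportedOn hd (hv i) (hsupp i)).trans
      (Nat.pow_le_pow_right (by omega) (hK i))
  have hpairs := sum_filter_lt_add_le_of_degree_le (fun i j => (X i ∩ X j).Nonempty)
    (fun i j h => by rwa [inter_comm]) hC (a := a) fun i => sum_nonneg fun α _ => sq_nonneg _
  have hlocal := sum_sum_norm_rankOne_sq_le (fun i α => (hv i).1 α) x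
  rw [hx, one_mul] at hlocal
  calc _ ≤ ∑ p ∈ {p : ι × ι | p.1 < p.2 ∧ (X p.1 ∩ X p.2).Nonempty},
          2 * d ^ K * (a p.1 + a p.2) :=
        sum_le_sum fun p _ => sum_sum_norm_add_sq_le _ _ (hcard _) (hcard _)
    _ = 2 * d ^ K * ∑ p ∈ {p : ι × ι | p.1 < p.2 ∧ (X p.1 ∩ X p.2).Nonempty},
          (a p.1 + a p.2) := (mul_sum ..).symm
    _ ≤ 2 * d ^ K * (2 * C * ‖(∑ i, ∑ α, rankOne (v i α)) x‖) := by
        gcongr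
        exact hpairs.trans (by gcongr)
    _ = _ := by ring

theorem overlapping_pair_square_expectation_tendsto_zero_general
    (d K C : ℕ) (hd : 2 ≤ d)
    (M : ℕ → ℕ) (I : ℕ → Type) [∀ N, Fintype (I N)] [∀ N, DecidableEq (I N)]
    [∀ N, LinearOrder (I N)]
    (X : ∀ N, I N → Finset (Fin (M N)))
    (P : ∀ N, (i : I N) → QuditSpace d (M N) →L[ℂ] QuditSpace d (M N))
    (A : ∀ N, QuditSpace d (M N))
    (hK : ∀ N (i : I N), (X N i).card ≤ K)
    (hC : ∀ N (i : I N),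
      (Finset.univ.filter fun i' : I N => i' ≠ i ∧ (X N i ∩ X N i').Nonempty).card ≤ C)
    (hA : ∀ N, ‖A N‖ = 1)
    (hlim : Tendsto (fun N => ‖(∑ i : I N, P N i) (A N)‖) atTop (nhds 0))
    (r : ∀ N, I N → ℕ)
    (pi : ∀ N (i : I N), Fin (r N i) → QuditSpace d (M N))
    (hpi : ∀ N (i : I N), Orthonormal ℂ (pi N i))
    (hPdec : ∀ N (i : I N), P N i = ∑ α : Fin (r N i), rankOne (pi N i α))
    (hPisupp : ∀ N (i : I N) (α : Fin (r N i)), SupportedOn (X N i) (rankOne (pi N i α))) :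
    Tendsto
      (fun N => ∑ p ∈ Finset.univ.filter
          (fun p : I N × I N => p.1 < p.2 ∧ (X N p.1 ∩ X N p.2).Nonempty),
        ∑ α : Fin (r N p.1), ∑ α' : Fin (r N p.2),
          (inner ℂ (A N)
            (((rankOne (pi N p.1 α) + rankOne (pi N p.2 α')) ∘L
              (rankOne (pi N p.1 α) + rankOne (pi N p.2 α'))) (A N)) : ℂ))
      atTop (nhds 0) := by
  simp only [hPdec] at hlim
  have hreal := squeeze_zero (fun N => by positivity)
    (fun N => sum_overlapping_pairs_norm_sq_le hd (hK N) (hC N) (hpi N) (hPisupp N) (hA N))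
    (by simpa using hlim.const_mul (4 * C * d ^ K : ℝ))
  simpa only [inner_rankOne_add_comp_self, ← Complex.ofReal_sum, Complex.ofReal_zero,
    Function.comp_def] using
    (Complex.continuous_ofReal.tendsto 0).comp hreal

/-- **Part 3 of Lemma 1 of the paper** (standard scarred-sequence setting, with each projector
`P_{N,i} = ∑ α Π_{N,i}^α` decomposed into rank-one projections onto an orthonormal family):
the sum over overlapping pairs `i < i'` of `⟨A_N, (Π_{N,i}^α + Π_{N,i'}^{α'})² A_N⟩`
tends to `0`. -/
theorem overlapping_pair_square_expectation_tendsto_zero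
    (d K C : ℕ) (hd : 2 ≤ d)
    (M : ℕ → ℕ) (I : ℕ → Type) [∀ N, Fintype (I N)] [∀ N, DecidableEq (I N)]
    [∀ N, LinearOrder (I N)]
    (X : ∀ N, I N → Finset (Fin (M N)))
    (P : ∀ N, (i : I N) → QuditSpace d (M N) →L[ℂ] QuditSpace d (M N))
    (A : ∀ N, QuditSpace d (M N))
    (hK : ∀ N (i : I N), (X N i).card ≤ K)
    (hC : ∀ N (i : I N),
      (Finset.univ.filter fun i' : I N => i' ≠ i ∧ (X N i ∩ X N i').Nonempty).card ≤ C)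
    (hproj : ∀ N (i : I N), IsOrthProj (P N i))
    (hsupp : ∀ N (i : I N), SupportedOn (X N i) (P N i))
    (hA : ∀ N, ‖A N‖ = 1)
    (hlim : Tendsto (fun N => ‖(∑ i : I N, P N i) (A N)‖) atTop (nhds 0))
    (r : ∀ N, I N → ℕ)
    (pi : ∀ N (i : I N), Fin (r N i) → QuditSpace d (M N))
    (hpi : ∀ N (i : I N), Orthonormal ℂ (pi N i))
    (hPdec : ∀ N (i : I N), P N i = ∑ α : Fin (r N i), rankOne (pi N i α))
    (hPisupp : ∀ N (i : I N) (α : Fin (r N i)), SupportedOn (X N i) (rankOne (pi N i α))) :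
    Tendsto
      (fun N => ∑ p ∈ Finset.univ.filter
          (fun p : I N × I N => p.1 < p.2 ∧ (X N p.1 ∩ X N p.2).Nonempty),
        ∑ α : Fin (r N p.1), ∑ α' : Fin (r N p.2),
          (inner ℂ (A N)
            (((rankOne (pi N p.1 α) + rankOne (pi N p.2 α')) ∘L
              (rankOne (pi N p.1 α) + rankOne (pi N p.2 α'))) (A N)) : ℂ))
      atTop (nhds 0) :=
  overlapping_pair_square_expectation_tendsto_zero_general d K C hd M I X P A hK hC hA hlim r pi hpi
    hPdec hPisupp
end
end

section
/- Let g ∈ ℂ be nonzero and N = 2m with m ≥ 1 an integer. Let B^(g) be the normalized boundary state on the N-qubit space: B^(g)(s) = g^{−n}/𝒩 if s has a single 1 located at site n and 0 elsewhere, B^(g)(s) = 0 otherwise, where 𝒩 = (Σ_{n=0}^{N−1} |g|^{−2n})^{1/2}. Identify configurations s : Fin N → Fin 2 with pairs (s₁, s₂) of configurations s₁, s₂ : Fin m → Fin 2 by splitting the chain into its first m and last m sites. Set r = |g^{−1}|, p₁ = 1/(1 + r^N) and p₂ = r^N/(1 + r^N). Then there exist unit vectors u, u' in the m-qubit space, each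 orthogonal to the basis vector e₀ indexed by the all-zeros configuration of m sites, and a complex number β with |β|² = p₂, such that B^(g)(s₁, s₂) = √p₁ · u(s₁) · e₀(s₂) + β · e₀(s₁) · u'(s₂) for all configurations s₁, s₂. -/
open scoped BigOperators

noncomputable section

/-- The configuration of `N` qubits with a single excitation (a single `1`) at site `k`. -/
def exc {N : ℕ} (k : Fin N) : Fin N → Fin 2 := fun j => if j = k then 1 else 0

/-- The normalised boundary state on `N` qubits: amplitude `g^{−n}/𝒩` on the configuration
with a single `1` at site `n` (`𝒩 = (∑ₙ |g|^{−2n})^{1/2}`), amplitude `0` otherwise. -/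
def bstate (g : ℂ) (N : ℕ) : (Fin N → Fin 2) → ℂ :=
  fun s => (∑ k : Fin N, if s = exc k then g ^ (-(k : ℕ) : ℤ) else 0) /
    ((Real.sqrt (∑ n : Fin N, ‖g‖ ^ (-(2 * (n : ℕ)) : ℤ)) : ℝ) : ℂ)

/-- Identification of a configuration of `2m` sites with a pair of configurations of `m`
sites (first and second half of the chain). -/
def join (m : ℕ) (s₁ s₂ : Fin m → Fin 2) : Fin (2 * m) → Fin 2 :=
  fun j => if h : (j : ℕ) < m then s₁ ⟨j, h⟩
    else s₂ ⟨(j : ℕ) - m, by have := j.isLt; omega⟩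

/-- The `m`-qubit basis vector indexed by the all-zeros configuration. -/
def e0 (m : ℕ) : (Fin m → Fin 2) → ℂ := Pi.single (fun _ => (0 : Fin 2)) (1 : ℂ)


/-! Write `z = g⁻¹` and `w_N(s) = ∑ₖ [s = exc k] zᵏ` for the unnormalised boundary state of an
`N`-site chain. The excitation of a configuration of `2m` sites sits either at site `k` of the
left half, the right half being empty, or at site `m + k`, the left half being empty; hence
`w_{2m}(s₁, s₂) = w_m(s₁) e₀(s₂) + zᵐ e₀(s₁) w_m(s₂)`, and likewise
`‖w_{2m}‖² = ‖w_m‖² (1 + |z|^{2m})`. So `u = u' = w_m / ‖w_m‖` and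
`β = zᵐ / (1 + |z|^{2m})^{1/2}` give the decomposition. -/

theorem sum_norm_sq_div_sqrt {ι : Type*} [Fintype ι] (f : ι → ℂ) (hf : 0 < ∑ i, ‖f i‖ ^ 2) :
    ∑ i, ‖f i / (√(∑ j, ‖f j‖ ^ 2) : ℂ)‖ ^ 2 = 1 := by
  simp only [norm_div, Complex.norm_real, Real.norm_of_nonneg (Real.sqrt_nonneg _), div_pow,
    Real.sq_sqrt hf.le, ← Finset.sum_div, div_self hf.ne']

section SingleExcitation

variable {N : ℕ}

theorem exc_injective : Function.Injective (exc (N := N)) := by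
  intro a b h
  by_contra hab
  simpa [exc, hab] using congrFun h a

theorem exc_ne_zero (k : Fin N) : exc k ≠ fun _ => 0 := fun h => by
  simpa [exc] using congrFun h k

def excState (c : Fin N → ℂ) (s : Fin N → Fin 2) : ℂ :=
  ∑ k, if s = exc k then c k else 0

theorem excState_exc (c : Fin N → ℂ) (k : Fin N) : excState c (exc k) = c k := by
  simp [excState, exc_injective.eq_iff]

theorem excState_of_forall_ne (c : Fin N → ℂ) {s : Fin N → Fin 2} (hs : ∀ k, s ≠ exc k) :
    excState c s = 0 := by
  simp [excState, hs]

theorem excState_zero (c : Fin N → ℂ) : excState c (fun _ => 0) = 0 :=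
  excState_of_forall_ne c fun k h => exc_ne_zero k h.symm

theorem excState_const_mul (a : ℂ) (c : Fin N → ℂ) (s : Fin N → Fin 2) :
    excState (fun k => a * c k) s = a * excState c s := by
  simp only [excState, Finset.mul_sum, mul_ite, mul_zero]

theorem sum_norm_sq_excState (c : Fin N → ℂ) :
    ∑ s, ‖excState c s‖ ^ 2 = ∑ k, ‖c k‖ ^ 2 := by
  symm
  refine Finset.sum_of_injOn exc exc_injective.injOn (by simp [Set.MapsTo]) ?_ ?_
  · intro s _ hs
    simp only [Finset.coe_univ, Set.image_univ, Set.mem_range, not_exists] at hs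
    simp [excState_of_forall_ne c fun k h => hs k h.symm]
  · intro k _
    rw [excState_exc]

end SingleExcitation

section HalfChains

variable {m : ℕ}

theorem join_inj {s₁ s₂ t₁ t₂ : Fin m → Fin 2} :
    join m s₁ s₂ = join m t₁ t₂ ↔ s₁ = t₁ ∧ s₂ = t₂ := by
  refine ⟨fun h => ⟨funext fun j => ?_, funext fun j => ?_⟩, fun ⟨h₁, h₂⟩ => h₁ ▸ h₂ ▸ rfl⟩
  · simpa [join] using congrFun h ⟨j, by omega⟩
  · simpa [join] using congrFun h ⟨m + j, by omega⟩

theorem join_exc_zero (k : Fin m) : join m (exc k) (fun _ => 0) = exc ⟨k, by omega⟩ := by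
  funext j
  simp only [join, exc, Fin.ext_iff]
  split_ifs <;> first | rfl | omega

theorem join_zero_exc (k : Fin m) : join m (fun _ => 0) (exc k) = exc ⟨m + k, by omega⟩ := by
  funext j
  simp only [join, exc, Fin.ext_iff]
  split_ifs <;> first | rfl | omega

theorem sum_fin_two_mul {M : Type*} [AddCommMonoid M] (f : Fin (2 * m) → M) :
    ∑ k, f k = ∑ k : Fin m, f ⟨k, by omega⟩ + ∑ k : Fin m, f ⟨m + k, by omega⟩ := by
  rw [← (finCongr (two_mul m)).symm.sum_comp, Fin.sum_univ_add]
  rfl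

theorem e0_apply (s : Fin m → Fin 2) : e0 m s = if s = fun _ => 0 then 1 else 0 :=
  Pi.single_apply _ _ _

theorem excState_join (c : Fin (2 * m) → ℂ) (s₁ s₂ : Fin m → Fin 2) :
    excState c (join m s₁ s₂) =
      excState (fun k : Fin m => c ⟨k, by omega⟩) s₁ * e0 m s₂ +
        e0 m s₁ * excState (fun k : Fin m => c ⟨m + k, by omega⟩) s₂ := by
  simp only [excState, sum_fin_two_mul, ← join_exc_zero, ← join_zero_exc, join_inj, e0_apply,
    Finset.sum_mul, Finset.mul_sum]
  congr 1 <;> refine Finset.sum_congr rfl fun k _ => ?_ <;> split_ifs <;> simp_all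

end HalfChains

section Geometric

def powState (z : ℂ) (N : ℕ) : (Fin N → Fin 2) → ℂ :=
  excState fun k => z ^ (k : ℕ)

theorem bstate_eq_powState (g : ℂ) (N : ℕ) (s : Fin N → Fin 2) :
    bstate g N s = powState g⁻¹ N s / (√(∑ n : Fin N, ‖g⁻¹ ^ (n : ℕ)‖ ^ 2) : ℂ) := by
  simp only [bstate, powState, excState, zpow_neg, zpow_natCast, inv_pow, norm_pow, norm_inv,
    ← pow_mul']
  norm_cast

theorem powState_join (z : ℂ) (m : ℕ) (s₁ s₂ : Fin m → Fin 2) :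
    powState z (2 * m) (join m s₁ s₂) =
      powState z m s₁ * e0 m s₂ + z ^ m * e0 m s₁ * powState z m s₂ := by
  simp only [powState, excState_join, pow_add, excState_const_mul]
  ring

theorem sum_norm_sq_pow_two_mul (z : ℂ) (m : ℕ) :
    ∑ n : Fin (2 * m), ‖z ^ (n : ℕ)‖ ^ 2 =
      (∑ k : Fin m, ‖z ^ (k : ℕ)‖ ^ 2) * (1 + ‖z‖ ^ (2 * m)) := by
  simp only [sum_fin_two_mul, pow_add, norm_mul, mul_pow, ← Finset.mul_sum]
  rw [norm_pow, ← pow_mul]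
  ring

theorem one_le_sum_norm_sq_pow (z : ℂ) {m : ℕ} (hm : 1 ≤ m) :
    1 ≤ ∑ k : Fin m, ‖z ^ (k : ℕ)‖ ^ 2 := by
  calc (1 : ℝ) = ‖z ^ ((⟨0, hm⟩ : Fin m) : ℕ)‖ ^ 2 := by simp
    _ ≤ ∑ k : Fin m, ‖z ^ (k : ℕ)‖ ^ 2 :=
      Finset.single_le_sum (f := fun k : Fin m => ‖z ^ (k : ℕ)‖ ^ 2)
        (fun _ _ => by positivity) (Finset.mem_univ _)

end Geometric

theorem boundary_state_schmidt_general (g : ℂ) (m : ℕ) (hm : 1 ≤ m) :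
    ∃ (u u' : (Fin m → Fin 2) → ℂ) (β : ℂ),
      (∑ s : Fin m → Fin 2, ‖u s‖ ^ 2) = 1 ∧
      (∑ s : Fin m → Fin 2, ‖u' s‖ ^ 2) = 1 ∧
      u (fun _ => 0) = 0 ∧ u' (fun _ => 0) = 0 ∧
      ‖β‖ ^ 2 =
        ‖g⁻¹‖ ^ (2 * m) / (1 + ‖g⁻¹‖ ^ (2 * m)) ∧
      ∀ s₁ s₂ : Fin m → Fin 2,
        bstate g (2 * m) (join m s₁ s₂) =
          ((Real.sqrt (1 / (1 + ‖g⁻¹‖ ^ (2 * m))) : ℝ) : ℂ) * u s₁ * e0 m s₂ +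
            β * e0 m s₁ * u' s₂ := by
  set W := ∑ k : Fin m, ‖g⁻¹ ^ (k : ℕ)‖ ^ 2
  set T := 1 + ‖g⁻¹‖ ^ (2 * m) with hT_def
  have hW : 0 < W := one_pos.trans_le (one_le_sum_norm_sq_pow g⁻¹ hm)
  have hT : 0 < T := by positivity
  have hu : ∑ s, ‖powState g⁻¹ m s‖ ^ 2 = W := sum_norm_sq_excState _
  have hu_zero : powState g⁻¹ m (fun _ => 0) / (√W : ℂ) = 0 := by
    rw [powState, excState_zero, zero_div]
  have hu_unit : ∑ s, ‖powState g⁻¹ m s / (√W : ℂ)‖ ^ 2 = 1 := by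
    rw [← hu]
    exact sum_norm_sq_div_sqrt _ (hu ▸ hW)
  refine ⟨fun s => powState g⁻¹ m s / (√W : ℂ), fun s => powState g⁻¹ m s / (√W : ℂ),
    g⁻¹ ^ m / (√T : ℂ), hu_unit, hu_unit, hu_zero, hu_zero, ?_, fun s₁ s₂ => ?_⟩
  · rw [norm_div, Complex.norm_real, norm_pow, div_pow, Real.norm_of_nonneg (Real.sqrt_nonneg _),
      Real.sq_sqrt hT.le, ← pow_mul, mul_comm]
  · rw [bstate_eq_powState, sum_norm_sq_pow_two_mul, ← hT_def, powState_join,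
      Real.sqrt_mul hW.le, one_div, Real.sqrt_inv]
    have hW_ne : (√W : ℂ) ≠ 0 := by exact_mod_cast (Real.sqrt_pos.2 hW).ne'
    have hT_ne : (√T : ℂ) ≠ 0 := by exact_mod_cast (Real.sqrt_pos.2 hT).ne'
    push_cast
    field_simp

/-- Schmidt decomposition of the boundary scar across the middle bond of a chain of even
length `N = 2m`: with `r = |g⁻¹|`, `p₁ = 1/(1+r^N)`, `p₂ = r^N/(1+r^N)`, there are unit
vectors `u`, `u'` of the half-chain, orthogonal to the all-zeros basis vector `e₀`, and a
scalar `β` with `|β|² = p₂`, such that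
`B^(g)(s₁, s₂) = √p₁ · u(s₁) · e₀(s₂) + β · e₀(s₁) · u'(s₂)`. -/
theorem boundary_state_schmidt (g : ℂ) (hg : g ≠ 0) (m : ℕ) (hm : 1 ≤ m) :
    ∃ (u u' : (Fin m → Fin 2) → ℂ) (β : ℂ),
      (∑ s : Fin m → Fin 2, ‖u s‖ ^ 2) = 1 ∧
      (∑ s : Fin m → Fin 2, ‖u' s‖ ^ 2) = 1 ∧
      u (fun _ => 0) = 0 ∧ u' (fun _ => 0) = 0 ∧
      ‖β‖ ^ 2 =
        ‖g⁻¹‖ ^ (2 * m) / (1 + ‖g⁻¹‖ ^ (2 * m)) ∧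
      ∀ s₁ s₂ : Fin m → Fin 2,
        bstate g (2 * m) (join m s₁ s₂) =
          ((Real.sqrt (1 / (1 + ‖g⁻¹‖ ^ (2 * m))) : ℝ) : ℂ) * u s₁ * e0 m s₂ +
            β * e0 m s₁ * u' s₂ :=
  boundary_state_schmidt_general g m hm
end
end
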